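/- Let m ≥ 1 be an integer and 0 < a < 1 be such that m − Σ_{k=1}^{m} a^k > β, where β = (4π²)^{−1} e^{2π} Φ(0) − 1 > 0 and Φ(0) = Σ_{n=1}^{∞} (2π² n⁴ − 3π n²) e^{−π n²}. Set c = β/(m − Σ_{k=1}^{m} a^k). Then 0 < c < 1, and the entire function F(z) = cos(mz) + c Σ_{k=0}^{m−1} (1 − a^{k+1}) cos(kz), where cos denotes the complex cosine, has only real zeros. -/

import Mathlib

/-!
The coefficients `c(1 − a^{k+1})` increase strictly from `c(1 − a) > 0` to below `1`, so
`F(z) = ∑_{k ≤ m} B_k cos (kz)` with `0 < B_0 < ⋯ < B_m = 1`. Summation by parts against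
`2 sin (θ/2) cos (kθ) = sin ((k + ½)θ) − sin ((k − ½)θ)` shows that `(-1)^j F(θ_j) > 0` at
`θ_j = (2j + 1)π/(2m + 1)`, `j < m`, and at `θ_m = π` the value is an alternating sum of an increasing
sequence; so `F` has `m` zeros in `(0, π)`. Since `F(z) = P(cos z)` for `P = ∑ B_k T_k` of degree `m`,
these give all roots of `P`: every zero `z` has `cos z = cos t` with `t` real, hence `z = 2kπ ± t`.
-/

open Real

/-- `Φ(0) = ∑_{n=1}^{∞} (2π² n⁴ − 3π n²) e^{−π n²}`. -/
noncomputable def Phi0 : ℝ :=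
  ∑' n : ℕ, (2 * π ^ 2 * (n + 1 : ℝ) ^ 4 - 3 * π * (n + 1 : ℝ) ^ 2) * exp (-π * (n + 1 : ℝ) ^ 2)

/-- `β = (4π²)⁻¹ e^{2π} Φ(0) − 1`. -/
noncomputable def betaConst : ℝ := (4 * π ^ 2)⁻¹ * exp (2 * π) * Phi0 - 1

noncomputable def phi0Term (x : ℝ) : ℝ := (2 * π ^ 2 * x ^ 4 - 3 * π * x ^ 2) * exp (-π * x ^ 2)

lemma Phi0_eq_tsum_phi0Term : Phi0 = ∑' n : ℕ, phi0Term (n + 1) := rfl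

lemma phi0Term_nonneg {x : ℝ} (hx : 1 ≤ x) : 0 ≤ phi0Term x := by
  have hπ := pi_gt_three
  have hx2 : 1 ≤ x ^ 2 := one_le_pow₀ hx
  have : 0 ≤ 2 * π * x ^ 2 - 3 := by nlinarith
  rw [phi0Term, show 2 * π ^ 2 * x ^ 4 - 3 * π * x ^ 2 = π * x ^ 2 * (2 * π * x ^ 2 - 3) by ring]
  positivity

lemma phi0Term_le {x : ℝ} (hx : 1 ≤ x) : phi0Term x ≤ 2 * π ^ 2 * (x ^ 4 * exp (-π * x)) := by
  have hexp : exp (-π * x ^ 2) ≤ exp (-π * x) := by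
    have : x ≤ x ^ 2 := by nlinarith
    exact exp_le_exp.mpr (by nlinarith [pi_pos])
  calc phi0Term x ≤ 2 * π ^ 2 * x ^ 4 * exp (-π * x ^ 2) := by
        unfold phi0Term
        gcongr
        nlinarith [pi_pos, sq_nonneg x]
    _ ≤ 2 * π ^ 2 * x ^ 4 * exp (-π * x) := by gcongr
    _ = 2 * π ^ 2 * (x ^ 4 * exp (-π * x)) := by ring

lemma summable_phi0Term : Summable fun n : ℕ => phi0Term (n + 1) := by
  have hmajor : Summable fun n : ℕ => ((n : ℝ) + 1) ^ 4 * exp (-π * ((n : ℝ) + 1)) := by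
    simpa using (summable_nat_add_iff 1).mpr (summable_pow_mul_exp_neg_nat_mul 4 pi_pos)
  have hone : ∀ n : ℕ, (1 : ℝ) ≤ n + 1 := fun n => by simp
  exact (hmajor.mul_left _).of_nonneg_of_le (fun n => phi0Term_nonneg (hone n))
    (fun n => phi0Term_le (hone n))

lemma phi0Term_one_le_Phi0 : phi0Term 1 ≤ Phi0 := by
  simpa [Phi0_eq_tsum_phi0Term] using
    summable_phi0Term.le_tsum 0 (fun n _ => phi0Term_nonneg (by simp))

/-- Only the first term of `Φ(0)` and `e^π ≥ π + 1` are needed: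
`(π + 1)(2π² − 3π) − 4π² = π(2π + 1)(π − 3)`. -/
lemma betaConst_pos : 0 < betaConst := by
  have hπ := pi_gt_three
  have hfirst : exp (2 * π) * phi0Term 1 = exp π * (2 * π ^ 2 - 3 * π) := by
    rw [phi0Term, show exp π = exp (2 * π) * exp (-π * 1 ^ 2) by rw [← exp_add]; ring_nf]
    ring
  have hkey : 4 * π ^ 2 < exp (2 * π) * Phi0 :=
    calc 4 * π ^ 2 < (π + 1) * (2 * π ^ 2 - 3 * π) := by nlinarith
      _ ≤ exp π * (2 * π ^ 2 - 3 * π) := by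
          gcongr
          · nlinarith
          · linarith [add_one_le_exp π]
      _ = exp (2 * π) * phi0Term 1 := hfirst.symm
      _ ≤ exp (2 * π) * Phi0 := by gcongr; exact phi0Term_one_le_Phi0
  rw [betaConst, sub_pos, mul_assoc, inv_mul_eq_div, one_lt_div (by positivity)]
  exact hkey

section CosineSum

variable (B : ℕ → ℝ) (m : ℕ)

lemma neg_one_pow_mul_alternating_sum_mem_Ioc (hB0 : 0 < B 0) (hB : ∀ k < m, B k < B (k + 1)) :
    (-1) ^ m * ∑ k ∈ Finset.range (m + 1), (-1) ^ k * B k ∈ Set.Ioc 0 (B m) := by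
  induction m with
  | zero => simpa using hB0
  | succ n ih =>
    obtain ⟨hpos, hle⟩ := ih (fun k hk => hB k (by omega))
    have hstep := hB n (by omega)
    rw [Finset.sum_range_succ, pow_succ, Set.mem_Ioc]
    rcases neg_one_pow_eq_or ℝ n with h | h <;> rw [h] at hpos hle ⊢ <;> constructor <;> linarith

lemma sum_range_succ_two_mul_sin_mul_cos (θ : ℝ) (n : ℕ) :
    ∑ k ∈ Finset.range (n + 1), 2 * sin (θ / 2) * cos (k * θ) =
      sin ((n + 1 / 2) * θ) + sin (θ / 2) := by
  induction n with
  | zero =>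
    simp only [zero_add, Finset.sum_range_one, Nat.cast_zero, zero_mul, cos_zero, mul_one]
    ring_nf
  | succ n ih =>
    rw [Finset.sum_range_succ, ih, two_mul_sin_mul_cos]
    have h1 : θ / 2 - ((n + 1 : ℕ) : ℝ) * θ = -((n + 1 / 2) * θ) := by push_cast; ring
    have h2 : θ / 2 + ((n + 1 : ℕ) : ℝ) * θ = ((n + 1 : ℕ) + 1 / 2) * θ := by push_cast; ring
    rw [h1, h2, sin_neg]
    ring

lemma neg_one_pow_mul_sum_cos_pos (hB0 : 0 < B 0) (hB : ∀ k < m, B k ≤ B (k + 1)) {θ : ℝ}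
    (hθ : θ ∈ Set.Ioo 0 π) {j : ℕ} (hj : sin ((m + 1 / 2) * θ) = (-1) ^ j) :
    0 < (-1) ^ j * ∑ k ∈ Finset.range (m + 1), B k * cos (k * θ) := by
  obtain ⟨hθ0, hθπ⟩ := hθ
  set σ := sin (θ / 2)
  have hσ0 : 0 < σ := sin_pos_of_pos_of_lt_pi (by linarith) (by linarith)
  have hσ1 : σ < 1 := by
    have : 0 < cos (θ / 2) := cos_pos_of_mem_Ioo ⟨by linarith, by linarith⟩
    nlinarith [sin_sq_add_cos_sq (θ / 2)]
  -- summation by parts against the partial sums of `2 sin (θ/2) cos (kθ)`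
  have hparts := Finset.sum_range_by_parts B (fun k => 2 * σ * cos (k * θ)) (m + 1)
  simp only [smul_eq_mul, Nat.add_sub_cancel, hj,
    show ∀ n : ℕ, ∑ k ∈ Finset.range (n + 1), 2 * σ * cos (k * θ) = sin ((n + 1 / 2) * θ) + σ from
      sum_range_succ_two_mul_sin_mul_cos θ] at hparts
  have hlhs : 2 * σ * ∑ k ∈ Finset.range (m + 1), B k * cos (k * θ) =
      ∑ k ∈ Finset.range (m + 1), B k * (2 * σ * cos (k * θ)) := by
    rw [Finset.mul_sum]
    exact Finset.sum_congr rfl fun k _ => by ring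
  have hsplit : ∑ k ∈ Finset.range m, (B (k + 1) - B k) * (sin ((k + 1 / 2) * θ) + σ) =
      ∑ k ∈ Finset.range m, (B (k + 1) - B k) * sin ((k + 1 / 2) * θ) + (B m - B 0) * σ := by
    rw [← Finset.sum_range_sub B m, Finset.sum_mul, ← Finset.sum_add_distrib]
    exact Finset.sum_congr rfl fun k _ => by ring
  have hR : |∑ k ∈ Finset.range m, (B (k + 1) - B k) * sin ((k + 1 / 2) * θ)| ≤ B m - B 0 :=
    calc _ ≤ ∑ k ∈ Finset.range m, |(B (k + 1) - B k) * sin ((k + 1 / 2) * θ)| :=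
          Finset.abs_sum_le_sum_abs _ _
      _ ≤ ∑ k ∈ Finset.range m, (B (k + 1) - B k) := by
          refine Finset.sum_le_sum fun k hk => ?_
          have hk := sub_nonneg.mpr (hB k (Finset.mem_range.mp hk))
          rw [abs_mul, abs_of_nonneg hk]
          exact mul_le_of_le_one_right hk (abs_sin_le_one _)
      _ = B m - B 0 := Finset.sum_range_sub B m
  have hB0σ : B 0 * σ < B 0 := mul_lt_of_lt_one_right hB0 hσ1
  have hpos : 0 < 2 * σ * ((-1) ^ j * ∑ k ∈ Finset.range (m + 1), B k * cos (k * θ)) := by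
    obtain ⟨hR1, hR2⟩ := abs_le.mp hR
    rcases neg_one_pow_eq_or ℝ j with h | h <;> rw [h] <;> nlinarith
  exact (mul_pos_iff_of_pos_left (by positivity)).mp hpos

end CosineSum

lemma exists_mem_Ioo_eq_zero_of_mul_neg {f : ℝ → ℝ} {a b : ℝ} (hab : a ≤ b)
    (hf : ContinuousOn f (Set.Icc a b)) (h : f a * f b < 0) : ∃ c ∈ Set.Ioo a b, f c = 0 := by
  rcases mul_neg_iff.mp h with ⟨ha, hb⟩ | ⟨ha, hb⟩
  · exact intermediate_value_Ioo' hab hf ⟨hb, ha⟩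
  · exact intermediate_value_Ioo hab hf ⟨ha, hb⟩

lemma exists_finset_zeros_of_alternating_signs {g : ℝ → ℝ} (hg : Continuous g) {x : ℕ → ℝ}
    (hx : StrictMono x) {n : ℕ} (hsign : ∀ j ≤ n, 0 < (-1) ^ j * g (x j)) :
    ∃ Z : Finset ℝ, Z.card = n ∧ ↑Z ⊆ Set.Ioo (x 0) (x n) ∧ ∀ t ∈ Z, g t = 0 := by
  have hzero : ∀ j < n, ∃ t ∈ Set.Ioo (x j) (x (j + 1)), g t = 0 := by
    intro j hj
    refine exists_mem_Ioo_eq_zero_of_mul_neg (hx j.lt_succ_self).le hg.continuousOn ?_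
    have h1 := hsign j hj.le
    have h2 := hsign (j + 1) hj
    rw [pow_succ] at h2
    rcases neg_one_pow_eq_or ℝ j with h | h <;> rw [h] at h1 h2 <;> nlinarith
  choose! t ht hgt using hzero
  have hmono : StrictMonoOn t (Finset.range n) := by
    intro i hi j hj hij
    simp only [Finset.coe_range, Set.mem_Iio] at hi hj
    calc t i < x (i + 1) := (ht i hi).2
      _ ≤ x j := hx.monotone hij
      _ < t j := (ht j hj).1
  refine ⟨(Finset.range n).image t, ?_, ?_, ?_⟩
  · rw [Finset.card_image_of_injOn hmono.injOn, Finset.card_range]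
  · intro s hs
    obtain ⟨j, hj, rfl⟩ := Finset.mem_image.mp (Finset.mem_coe.mp hs)
    have hj := Finset.mem_range.mp hj
    exact ⟨(hx.monotone j.zero_le).trans_lt (ht j hj).1,
      (ht j hj).2.trans_le (hx.monotone hj)⟩
  · intro s hs
    obtain ⟨j, hj, rfl⟩ := Finset.mem_image.mp hs
    exact hgt j (Finset.mem_range.mp hj)

/-- The sample points `(2j + 1)π/(2m + 1)` are where `sin ((m + 1/2) θ) = ± 1`. -/
lemma exists_finset_zeros_sum_cos (B : ℕ → ℝ) (m : ℕ) (hB0 : 0 < B 0)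
    (hB : ∀ k < m, B k < B (k + 1)) :
    ∃ Z : Finset ℝ, Z.card = m ∧ ↑Z ⊆ Set.Ioo 0 π ∧
      ∀ t ∈ Z, ∑ k ∈ Finset.range (m + 1), B k * cos (k * t) = 0 := by
  set x : ℕ → ℝ := fun j => (2 * j + 1) * π / (2 * m + 1)
  have hx : StrictMono x := fun i j hij => by
    have : (i : ℝ) < j := by exact_mod_cast hij
    simp only [x]
    gcongr
  have hx0 : 0 < x 0 := by positivity
  have hxm : x m = π := by simp only [x]; field_simp
  have hsign : ∀ j ≤ m, 0 < (-1) ^ j * ∑ k ∈ Finset.range (m + 1), B k * cos (k * x j) := by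
    intro j hj
    rcases hj.lt_or_eq with hj | rfl
    · refine neg_one_pow_mul_sum_cos_pos B m hB0 (fun k hk => (hB k hk).le)
        ⟨(hx0.trans_le (hx.monotone j.zero_le)), hxm ▸ hx hj⟩ ?_
      rw [show (m + 1 / 2 : ℝ) * x j = j * π + π / 2 by simp only [x]; field_simp,
        sin_add_pi_div_two, cos_nat_mul_pi]
    · simp only [hxm, cos_nat_mul_pi, mul_comm (B _)]
      exact (neg_one_pow_mul_alternating_sum_mem_Ioc B j hB0 hB).1
  have hcont : Continuous fun θ => ∑ k ∈ Finset.range (m + 1), B k * cos (k * θ) := by fun_prop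
  obtain ⟨Z, hcard, hZ, hzero⟩ := exists_finset_zeros_of_alternating_signs hcont hx hsign
  exact ⟨Z, hcard, hZ.trans (Set.Ioo_subset_Ioo hx0.le hxm.le), hzero⟩

open Polynomial

noncomputable def cosPolynomial (b : ℕ → ℂ) (m : ℕ) : ℂ[X] :=
  ∑ k ∈ Finset.range (m + 1), C (b k) * Chebyshev.T ℂ k

section CosPolynomial

variable (b : ℕ → ℂ) (m : ℕ)

lemma cosPolynomial_eval_cos (z : ℂ) :
    (cosPolynomial b m).eval (Complex.cos z) =
      ∑ k ∈ Finset.range (m + 1), b k * Complex.cos (k * z) := by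
  simp [cosPolynomial, eval_finsetSum, Chebyshev.T_complex_cos]

lemma natDegree_cosPolynomial_le : (cosPolynomial b m).natDegree ≤ m := by
  refine natDegree_sum_le_of_forall_le _ _ fun k hk => (natDegree_C_mul_le _ _).trans ?_
  rw [Chebyshev.natDegree_T]
  simpa [Nat.lt_succ_iff] using hk

lemma coeff_cosPolynomial : (cosPolynomial b m).coeff m = b m * 2 ^ (m - 1) := by
  rw [cosPolynomial, finsetSum_coeff, Finset.sum_eq_single m]
  · have := Chebyshev.leadingCoeff_T ℂ m
    rw [leadingCoeff, Chebyshev.natDegree_T, Int.natAbs_natCast] at this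
    rw [coeff_C_mul, this]
  · intro k hk hkm
    rw [coeff_C_mul, coeff_eq_zero_of_natDegree_lt, mul_zero]
    rw [Chebyshev.natDegree_T]
    simp only [Finset.mem_range] at hk
    omega
  · simp

end CosPolynomial

lemma cosPolynomial_ne_zero {b : ℕ → ℂ} {m : ℕ} (hbm : b m ≠ 0) : cosPolynomial b m ≠ 0 := by
  intro h
  have := coeff_cosPolynomial b m
  rw [h, coeff_zero] at this
  exact mul_ne_zero hbm (pow_ne_zero _ two_ne_zero) this.symm

/-- `cos z` is a root of the polynomial `cosPolynomial b m` of degree `m`, whose `m` roots are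
already the values `cos t`, `t ∈ Z`; so `z ≡ ± t (mod 2π)`. -/
theorem im_eq_zero_of_sum_cos_eq_zero (b : ℕ → ℂ) (m : ℕ) (hbm : b m ≠ 0) (Z : Finset ℝ)
    (hZ : ↑Z ⊆ Set.Icc 0 π) (hcard : Z.card = m)
    (hzero : ∀ t ∈ Z, ∑ k ∈ Finset.range (m + 1), b k * Complex.cos (k * t) = 0) {z : ℂ}
    (hz : ∑ k ∈ Finset.range (m + 1), b k * Complex.cos (k * z) = 0) : z.im = 0 := by
  classical
  set S := Z.image fun t : ℝ => (Real.cos t : ℂ)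
  have hSm : S.card = m := (Finset.card_image_of_injOn
    (Complex.ofReal_injective.comp_injOn (injOn_cos.mono hZ))).trans hcard
  have hmem : Complex.cos z ∈ S := by
    by_contra hzS
    refine cosPolynomial_ne_zero hbm
      (eq_zero_of_natDegree_lt_card_of_eval_eq_zero' _ (insert (Complex.cos z) S) ?_ ?_)
    · intro w hw
      rcases Finset.mem_insert.mp hw with rfl | hw
      · rw [cosPolynomial_eval_cos, hz]
      · obtain ⟨t, ht, rfl⟩ := Finset.mem_image.mp hw
        rw [Complex.ofReal_cos, cosPolynomial_eval_cos, hzero t ht]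
    · rw [Finset.card_insert_of_notMem hzS, hSm]
      exact Nat.lt_succ_of_le (natDegree_cosPolynomial_le b m)
  obtain ⟨t, -, ht⟩ := Finset.mem_image.mp hmem
  rw [Complex.ofReal_cos, Complex.cos_eq_cos_iff] at ht
  obtain ⟨k, rfl | rfl⟩ := ht <;> simp

theorem im_eq_zero_of_sum_cos_eq_zero_of_strictly_increasing (B : ℕ → ℝ) (m : ℕ) (hB0 : 0 < B 0)
    (hB : ∀ k < m, B k < B (k + 1)) {z : ℂ}
    (hz : ∑ k ∈ Finset.range (m + 1), (B k : ℂ) * Complex.cos (k * z) = 0) : z.im = 0 := by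
  obtain ⟨Z, hcard, hZ, hzero⟩ := exists_finset_zeros_sum_cos B m hB0 hB
  have hBm : (B m : ℂ) ≠ 0 := by
    obtain ⟨hpos, hle⟩ := neg_one_pow_mul_alternating_sum_mem_Ioc B m hB0 hB
    exact_mod_cast (hpos.trans_le hle).ne'
  refine im_eq_zero_of_sum_cos_eq_zero (fun k => B k) m hBm Z (hZ.trans Set.Ioo_subset_Icc_self)
    hcard (fun t ht => ?_) hz
  exact_mod_cast hzero t ht

noncomputable def cosCoeff (c a : ℝ) (m k : ℕ) : ℝ := if k = m then 1 else c * (1 - a ^ (k + 1))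

section CosCoeff

variable {c a : ℝ} {m : ℕ}

lemma cosCoeff_zero_pos (hc0 : 0 < c) (ha1 : a < 1) : 0 < cosCoeff c a m 0 := by
  unfold cosCoeff
  split_ifs
  · exact one_pos
  · exact mul_pos hc0 (by simpa using ha1)

lemma cosCoeff_lt_succ (hc0 : 0 < c) (hc1 : c < 1) (ha0 : 0 < a) (ha1 : a < 1) {k : ℕ}
    (hk : k < m) : cosCoeff c a m k < cosCoeff c a m (k + 1) := by
  have hpow : a ^ (k + 2) < a ^ (k + 1) := pow_lt_pow_right_of_lt_one₀ ha0 ha1 (by omega)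
  have hpos : 0 < a ^ (k + 2) := by positivity
  unfold cosCoeff
  split_ifs with h1 h2 <;> first | omega | nlinarith

lemma sum_cosCoeff_mul_cos (c a : ℝ) (m : ℕ) (z : ℂ) :
    ∑ k ∈ Finset.range (m + 1), (cosCoeff c a m k : ℂ) * Complex.cos (k * z) =
      Complex.cos (m * z) +
        c * ∑ k ∈ Finset.range m, ((1 - a ^ (k + 1) : ℝ) : ℂ) * Complex.cos (k * z) := by
  rw [Finset.sum_range_succ, add_comm, Finset.mul_sum]
  congr 1
  · simp [cosCoeff]
  · refine Finset.sum_congr rfl fun k hk => ?_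
    rw [cosCoeff, if_neg (Finset.mem_range.mp hk).ne]
    push_cast
    ring

end CosCoeff

theorem PhiS2_core_real_zeros_general (m : ℕ) (a : ℝ) (ha0 : 0 < a) (ha1 : a < 1)
    (hma : betaConst < (m : ℝ) - ∑ k ∈ Finset.Icc 1 m, a ^ k) :
    (0 < betaConst / ((m : ℝ) - ∑ k ∈ Finset.Icc 1 m, a ^ k) ∧
      betaConst / ((m : ℝ) - ∑ k ∈ Finset.Icc 1 m, a ^ k) < 1) ∧
    ∀ z : ℂ,
      Complex.cos (m * z) +
          (betaConst / ((m : ℝ) - ∑ k ∈ Finset.Icc 1 m, a ^ k) : ℝ) *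
            ∑ k ∈ Finset.range m, ((1 - a ^ (k + 1) : ℝ) : ℂ) * Complex.cos (k * z) = 0 →
      z.im = 0 := by
  have hd : 0 < (m : ℝ) - ∑ k ∈ Finset.Icc 1 m, a ^ k := betaConst_pos.trans hma
  set c := betaConst / ((m : ℝ) - ∑ k ∈ Finset.Icc 1 m, a ^ k)
  have hc0 : 0 < c := div_pos betaConst_pos hd
  have hc1 : c < 1 := (div_lt_one hd).mpr hma
  refine ⟨⟨hc0, hc1⟩, fun z hz => ?_⟩
  refine im_eq_zero_of_sum_cos_eq_zero_of_strictly_increasing (cosCoeff c a m) m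
    (cosCoeff_zero_pos hc0 ha1) (fun k hk => cosCoeff_lt_succ hc0 hc1 ha0 ha1 hk) ?_
  rwa [sum_cosCoeff_mul_cos]

/-- **Theorem 2(C) of the paper (trigonometric core).** For `m ≥ 1` and `0 < a < 1` with
`m − ∑_{k=1}^{m} a^k > β`, setting `c = β/(m − ∑_{k=1}^{m} a^k)` one has `0 < c < 1`, and
the entire function `F(z) = cos(mz) + c ∑_{k=0}^{m−1} (1 − a^{k+1}) cos(kz)` has only
real zeros. -/
theorem PhiS2_core_real_zeros (m : ℕ) (hm : 1 ≤ m) (a : ℝ) (ha0 : 0 < a) (ha1 : a < 1)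
    (hma : betaConst < (m : ℝ) - ∑ k ∈ Finset.Icc 1 m, a ^ k) :
    (0 < betaConst / ((m : ℝ) - ∑ k ∈ Finset.Icc 1 m, a ^ k) ∧
      betaConst / ((m : ℝ) - ∑ k ∈ Finset.Icc 1 m, a ^ k) < 1) ∧
    ∀ z : ℂ,
      Complex.cos (m * z) +
          (betaConst / ((m : ℝ) - ∑ k ∈ Finset.Icc 1 m, a ^ k) : ℝ) *
            ∑ k ∈ Finset.range m, ((1 - a ^ (k + 1) : ℝ) : ℂ) * Complex.cos (k * z) = 0 →
      z.im = 0 :=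
  PhiS2_core_real_zeros_general m a ha0 ha1 hma
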